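/- Let W_0 ∈ B^γ be a block graphon. Then I_{W_0} is lower semicontinuous on the set of graphons with respect to the cut distance d_□: for every graphon f and every sequence of graphons (f_n) with d_□(f_n, f) → 0, one has I_{W_0}(f) ≤ liminf_{n→∞} I_{W_0}(f_n). -/

import Mathlib

open MeasureTheory Set Filter
open scoped ENNReal NNReal

noncomputable section

namespace GraphonLDP

/-- The unit square `[0,1]² ⊆ ℝ²`. -/
def unitSq : Set (ℝ × ℝ) := Set.Icc (0:ℝ) 1 ×ˢ Set.Icc (0:ℝ) 1

/-- A graphon: a measurable, symmetric function with values in `[0,1]`. -/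
def IsGraphon (f : ℝ → ℝ → ℝ) : Prop :=
  Measurable (Function.uncurry f) ∧ (∀ x y, f x y ∈ Set.Icc (0:ℝ) 1) ∧ ∀ x y, f x y = f y x

open Classical in
/-- The pointwise relative entropy `h_p(u)`, valued in `[0,∞]`
(with `h_0(0) = h_1(1) = 0`, `h_0(u) = ∞` for `u ≠ 0`, `h_1(u) = ∞` for `u ≠ 1`,
and the convention `0 log 0 = 0`, which is automatic since `Real.log 0 = 0`). -/
def relEnt (p u : ℝ) : ℝ≥0∞ :=
  if p = 0 then (if u = 0 then 0 else ⊤)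
  else if p = 1 then (if u = 1 then 0 else ⊤)
  else ENNReal.ofReal (u * Real.log (u / p) + (1 - u) * Real.log ((1 - u) / (1 - p)))

/-- The relative entropy functional `I_{W₀}(f)`, valued in `[0,∞]`. -/
def Ient (W₀ f : ℝ → ℝ → ℝ) : ℝ≥0∞ :=
  (1 / 2) * ∫⁻ q in unitSq, relEnt (W₀ q.1 q.2) (f q.1 q.2)

/-- `Ω = {(x,y) ∈ [0,1]² : 0 < W₀(x,y) < 1}`. -/
def OmegaSet (W₀ : ℝ → ℝ → ℝ) : Set (ℝ × ℝ) :=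
  {q | q ∈ unitSq ∧ W₀ q.1 q.2 ∈ Set.Ioo (0:ℝ) 1}

/-- `f ∈ W_Ω`: `f` is a graphon agreeing with `W₀` a.e. on `[0,1]² \ Ω`. -/
def MemWOmega (W₀ f : ℝ → ℝ → ℝ) : Prop :=
  IsGraphon f ∧
    ∀ᵐ q ∂(volume.restrict (unitSq \ OmegaSet W₀)), f q.1 q.2 = W₀ q.1 q.2

/-- The cut distance `d_□(f,g)`. -/
def cutDist (f g : ℝ → ℝ → ℝ) : ℝ :=
  ⨆ p : {S : Set ℝ // MeasurableSet S ∧ S ⊆ Set.Icc (0:ℝ) 1} ×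
        {T : Set ℝ // MeasurableSet T ∧ T ⊆ Set.Icc (0:ℝ) 1},
    |∫ q in ((p.1 : Set ℝ) ×ˢ (p.2 : Set ℝ)), (f q.1 q.2 - g q.1 q.2)|

/-- The set of values of `W₀` on the unit square. -/
def imageVals (W₀ : ℝ → ℝ → ℝ) : Set ℝ := {w : ℝ | ∃ q ∈ unitSq, W₀ q.1 q.2 = w}

/-- Real-valued relative entropy `h_p(u)` for `p ∈ (0,1)`. -/
def hRel (p u : ℝ) : ℝ :=
  u * Real.log (u / p) + (1 - u) * Real.log ((1 - u) / (1 - p))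

/-- `ψ_p(x) = h_p(x^{1/d})`. -/
def psi (d : ℕ) (p : ℝ) : ℝ → ℝ := fun x => hRel p (x ^ ((d : ℝ)⁻¹))

/-- The convex minorant on `[0,1]`: pointwise supremum of affine minorants. -/
def convexMinorant (F : ℝ → ℝ) (x : ℝ) : ℝ :=
  sSup {y : ℝ | ∃ a b : ℝ, (∀ z ∈ Set.Icc (0:ℝ) 1, a * z + b ≤ F z) ∧ y = a * x + b}

/-- `A⁺_ε(f,c) = {(x,y) ∈ [0,1]² : f(x,y) − c ≥ ε}`. -/
def Aplus (f : ℝ → ℝ → ℝ) (c ε : ℝ) : Set (ℝ × ℝ) :=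
  {q | q ∈ unitSq ∧ ε ≤ f q.1 q.2 - c}

/-- `A⁻_ε(f,c) = {(x,y) ∈ [0,1]² : c − f(x,y) ≥ ε}`. -/
def Aminus (f : ℝ → ℝ → ℝ) (c ε : ℝ) : Set (ℝ × ℝ) :=
  {q | q ∈ unitSq ∧ ε ≤ c - f q.1 q.2}

/-- Partial sums `γ_1 + ⋯ + γ_n`. -/
def cumSum {m : ℕ} (γ : Fin m → ℝ) (n : ℕ) : ℝ :=
  ∑ i : Fin m, if (i : ℕ) < n then γ i else 0

/-- The interval `I_j` of the block structure: `I_1 = [0,γ_1]`,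
`I_j = (γ_1+⋯+γ_{j-1}, γ_1+⋯+γ_j]` for `j ≥ 2`. -/
def blockI {m : ℕ} (γ : Fin m → ℝ) (j : Fin m) : Set ℝ :=
  if (j : ℕ) = 0 then Set.Icc 0 (cumSum γ 1)
  else Set.Ioc (cumSum γ (j : ℕ)) (cumSum γ ((j : ℕ) + 1))

/-- `γ` is a vector of positive block widths summing to `1`. -/
def GoodWidths {m : ℕ} (γ : Fin m → ℝ) : Prop :=
  (∀ i, 0 < γ i) ∧ ∑ i, γ i = 1

/-- `f` is the block graphon in `B^γ` with matrix `P`. -/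
def IsBlockGraphon {m : ℕ} (γ : Fin m → ℝ) (P : Fin m → Fin m → ℝ) (f : ℝ → ℝ → ℝ) : Prop :=
  (∀ i j, P i j ∈ Set.Icc (0:ℝ) 1) ∧ (∀ i j, P i j = P j i) ∧
    ∀ i j, ∀ x ∈ blockI γ i, ∀ y ∈ blockI γ j, f x y = P i j

/-- The homomorphism density `t(H,f)`. -/
def homDensity {v : ℕ} (H : SimpleGraph (Fin v)) [DecidableRel H.Adj] (f : ℝ → ℝ → ℝ) : ℝ :=
  ∫ x in Set.univ.pi (fun _ : Fin v => Set.Icc (0:ℝ) 1),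
    ∏ e ∈ Finset.univ.filter (fun e : Fin v × Fin v => e.1 < e.2 ∧ H.Adj e.1 e.2),
      f (x e.1) (x e.2)

/-- `‖g‖_d = (∫_{[0,1]²} g^d)^{1/d}`. -/
def normD (d : ℕ) (g : ℝ → ℝ → ℝ) : ℝ :=
  (∫ q in unitSq, (g q.1 q.2) ^ d) ^ ((d : ℝ)⁻¹)

/-- The rescaled restriction `f_{ij}` of `f` to the block `I_i × I_j`. -/
def fBlock {m : ℕ} (γ : Fin m → ℝ) (f : ℝ → ℝ → ℝ) (i j : Fin m) : ℝ → ℝ → ℝ :=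
  fun x y => f (cumSum γ (i : ℕ) + x * γ i) (cumSum γ (j : ℕ) + y * γ j)

/-- `K_{W₀}(f,a)`. -/
def Kfun (W₀ f a : ℝ → ℝ → ℝ) : ℝ :=
  ∫ q in unitSq,
    (a q.1 q.2 * f q.1 q.2 -
      Real.log (W₀ q.1 q.2 * Real.exp (a q.1 q.2) + 1 - W₀ q.1 q.2))

/-- Symmetric functions in `L²([0,1]²)`. -/
def SymL2 (a : ℝ → ℝ → ℝ) : Prop :=
  Measurable (Function.uncurry a) ∧
    (∀ᵐ q ∂(volume.restrict unitSq), a q.1 q.2 = a q.2 q.1) ∧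
    IntegrableOn (fun q : ℝ × ℝ => (a q.1 q.2) ^ 2) unitSq

/-- The matrix `P` with the entries `(a,b)` and `(b,a)` replaced by `q`. -/
def modMat {m : ℕ} (P : Fin m → Fin m → ℝ) (a b : Fin m) (q : ℝ) :
    Fin m → Fin m → ℝ :=
  fun i j => if (i = a ∧ j = b) ∨ (i = b ∧ j = a) then q else P i j

/-- The block `I_a × I_b` of the block graphon `W₀ = (P i j)` is relevant:
`P a b > 0` and replacing the entries `P a b = P b a` by any strictly smaller
(nonnegative) value strictly decreases the homomorphism density of `H`. -/
def RelevantBlock {v m : ℕ} (H : SimpleGraph (Fin v)) [DecidableRel H.Adj]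
    (γ : Fin m → ℝ) (P : Fin m → Fin m → ℝ) (W₀ : ℝ → ℝ → ℝ) (a b : Fin m) : Prop :=
  0 < P a b ∧ ∀ q : ℝ, 0 ≤ q → q < P a b →
    ∀ g : ℝ → ℝ → ℝ, IsGraphon g → IsBlockGraphon γ (modMat P a b q) g →
      homDensity H g < homDensity H W₀

open Classical in
/-- `g^{+η}`: equal to `min (g + η) 1` on `Ω` and to `g` off `Ω`. -/
def gplus (W₀ g : ℝ → ℝ → ℝ) (η : ℝ) : ℝ → ℝ → ℝ := fun x y =>
  if (x, y) ∈ OmegaSet W₀ then min (g x y + η) 1 else g x y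

open Classical in
/-- The graphon `f_{a,b,c}^γ`: `a` on `[0,γ]²`, `c` on `(γ,1]²`, `b` elsewhere. -/
def fabc (γ a b c : ℝ) : ℝ → ℝ → ℝ := fun x y =>
  if x ∈ Set.Icc (0:ℝ) γ ∧ y ∈ Set.Icc (0:ℝ) γ then a
  else if x ∈ Set.Ioc γ 1 ∧ y ∈ Set.Ioc γ 1 then c
  else b

/-- Membership in the two-block family `B^{(γ,1-γ)} = {f_{a,b,c}^γ : a,b,c ∈ [0,1]}`. -/
def memB2 (γ : ℝ) (f : ℝ → ℝ → ℝ) : Prop :=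
  ∃ a b c : ℝ, a ∈ Set.Icc (0:ℝ) 1 ∧ b ∈ Set.Icc (0:ℝ) 1 ∧ c ∈ Set.Icc (0:ℝ) 1 ∧
    f = fabc γ a b c

/-- The diagonal blocks `[0,γ]² ∪ (γ,1]²`. -/
def diagBlocks (γ : ℝ) : Set (ℝ × ℝ) :=
  (Set.Icc (0:ℝ) γ ×ˢ Set.Icc (0:ℝ) γ) ∪ (Set.Ioc γ 1 ×ˢ Set.Ioc γ 1)

/-- The operator norm `‖f‖_op = sup {‖T_f u‖₂ : ‖u‖₂ ≤ 1}` of the kernel operator `T_f`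
on `L²([0,1])`. -/
def opNorm (f : ℝ → ℝ → ℝ) : ℝ :=
  sSup {c : ℝ | ∃ u : ℝ → ℝ, Measurable u ∧
    eLpNorm u 2 (volume.restrict (Set.Icc (0:ℝ) 1)) ≤ 1 ∧
    c = (∫ x in Set.Icc (0:ℝ) 1, (∫ y in Set.Icc (0:ℝ) 1, f x y * u y) ^ 2) ^ ((2:ℝ)⁻¹)}

section LSC

def phiD (p u t : ℝ) : ℝ := t * u - Real.log (p * Real.exp t + 1 - p)

def tst (p u : ℝ) : ℝ := Real.log (u * (1 - p) / (p * (1 - u)))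

open Classical in
def aOpt (M p u : ℝ) : ℝ :=
  if p ≤ 0 then M else if 1 ≤ p then -M
  else if u ≤ 0 then -M else if 1 ≤ u then M
  else if |tst p u| ≤ M then tst p u else 0

lemma base_pos {p : ℝ} (hp0 : 0 ≤ p) (hp1 : p ≤ 1) (t : ℝ) :
    0 < p * Real.exp t + 1 - p := by
  rcases le_or_gt (Real.exp t) 1 with h | h
  · nlinarith [Real.exp_pos t]
  · nlinarith [Real.exp_pos t]

lemma phiD_zero_t {p u : ℝ} : phiD p u 0 = 0 := by
  have : p * Real.exp 0 + 1 - p = 1 := by simp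
  simp [phiD, this]

lemma phiD_p_zero {u t : ℝ} : phiD 0 u t = t * u := by
  have : (0:ℝ) * Real.exp t + 1 - 0 = 1 := by ring
  simp [phiD, this]

lemma phiD_p_one {u t : ℝ} : phiD 1 u t = t * (u - 1) := by
  have : (1:ℝ) * Real.exp t + 1 - 1 = Real.exp t := by ring
  simp [phiD, this, Real.log_exp]; ring

lemma phiD_u_zero {p t : ℝ} : phiD p 0 t = - Real.log (p * Real.exp t + 1 - p) := by
  simp [phiD]

lemma phiD_u_one {p t : ℝ} (hp0 : 0 < p) (hp1 : p ≤ 1) :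
    phiD p 1 t = - Real.log (p + (1 - p) * Real.exp (-t)) := by
  have hb : p * Real.exp t + 1 - p = (p + (1-p) * Real.exp (-t)) * Real.exp t := by
    rw [Real.exp_neg]
    field_simp
    ring
  have hpos : 0 < p + (1-p) * Real.exp (-t) := by
    nlinarith [Real.exp_pos (-t)]
  rw [phiD, hb, Real.log_mul (ne_of_gt hpos) (Real.exp_ne_zero t), Real.log_exp]
  ring

/-- the Gibbs/duality inequality, interior case -/
lemma phiD_le_hRel {p u : ℝ} (hp0 : 0 < p) (hp1 : p < 1) (hu0 : 0 ≤ u) (hu1 : u ≤ 1)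
    (t : ℝ) : phiD p u t ≤ hRel p u := by
  have h1p : (0:ℝ) < 1 - p := by linarith
  rcases eq_or_lt_of_le hu0 with h0 | h0
  · -- u = 0
    subst h0
    rw [phiD_u_zero, hRel]
    simp only [zero_mul, zero_div, sub_zero, one_mul]
    have h1 : Real.log (1 / (1-p)) = - Real.log (1-p) := by
      rw [one_div, Real.log_inv]
    rw [h1]
    have : Real.log (1-p) ≤ Real.log (p * Real.exp t + 1 - p) := by
      apply Real.log_le_log (by linarith)
      nlinarith [Real.exp_pos t]
    linarith
  rcases eq_or_lt_of_le hu1 with h1 | h1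
  · -- u = 1
    subst h1
    rw [hRel]
    simp only [sub_self, zero_mul, one_mul, zero_div, add_zero]
    have h2 : Real.log (1 / p) = - Real.log p := by rw [one_div, Real.log_inv]
    rw [h2]
    have hkey : Real.log p + t ≤ Real.log (p * Real.exp t + 1 - p) := by
      have he : Real.log p + t = Real.log (p * Real.exp t) := by
        rw [Real.log_mul (ne_of_gt hp0) (Real.exp_ne_zero t), Real.log_exp]
      rw [he]
      apply Real.log_le_log (mul_pos hp0 (Real.exp_pos t))
      linarith
    rw [phiD]
    nlinarith [hkey]
  -- interior case
  have hu0' : 0 < u := h0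
  have hu1' : (0:ℝ) < 1 - u := by linarith
  have hx1 : 0 < p * Real.exp t / u := div_pos (mul_pos hp0 (Real.exp_pos t)) hu0'
  have hx2 : (0:ℝ) < (1-p)/(1-u) := div_pos h1p hu1'
  have hAM : (p * Real.exp t / u) ^ u * ((1-p)/(1-u)) ^ (1-u)
      ≤ u * (p * Real.exp t / u) + (1-u) * ((1-p)/(1-u)) := by
    exact Real.geom_mean_le_arith_mean2_weighted (le_of_lt hu0') (le_of_lt hu1')
      (le_of_lt hx1) (le_of_lt hx2) (by ring)
  have hne1 : u ≠ 0 := ne_of_gt hu0'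
  have hne2 : (1:ℝ) - u ≠ 0 := ne_of_gt hu1'
  have hsum : u * (p * Real.exp t / u) + (1-u) * ((1-p)/(1-u)) = p * Real.exp t + 1 - p := by
    field_simp
    ring
  have hAM' : (p * Real.exp t / u) ^ u * ((1-p)/(1-u)) ^ (1-u) ≤ p * Real.exp t + 1 - p := by
    rw [hsum] at hAM; exact hAM
  have hlog : u * Real.log (p * Real.exp t / u) + (1-u) * Real.log ((1-p)/(1-u))
      ≤ Real.log (p * Real.exp t + 1 - p) := by
    have hL : Real.log ((p * Real.exp t / u) ^ u * ((1-p)/(1-u)) ^ (1-u))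
        = u * Real.log (p * Real.exp t / u) + (1-u) * Real.log ((1-p)/(1-u)) := by
      rw [Real.log_mul (by positivity) (by positivity), Real.log_rpow hx1,
        Real.log_rpow hx2]
    rw [← hL]
    exact Real.log_le_log (by positivity) hAM'
  have e1 : Real.log (p * Real.exp t / u) = Real.log p + t - Real.log u := by
    rw [Real.log_div (ne_of_gt (mul_pos hp0 (Real.exp_pos t))) hne1,
      Real.log_mul (ne_of_gt hp0) (Real.exp_ne_zero t), Real.log_exp]
  have e2 : Real.log ((1-p)/(1-u)) = Real.log (1-p) - Real.log (1-u) := by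
    rw [Real.log_div (ne_of_gt h1p) hne2]
  rw [e1, e2] at hlog
  rw [phiD, hRel, Real.log_div hne1 (ne_of_gt hp0),
    Real.log_div hne2 (ne_of_gt h1p)]
  nlinarith [hlog]

lemma hRel_nonneg {p u : ℝ} (hp0 : 0 < p) (hp1 : p < 1) (hu0 : 0 ≤ u) (hu1 : u ≤ 1) :
    0 ≤ hRel p u := by
  have := phiD_le_hRel hp0 hp1 hu0 hu1 0
  rwa [phiD_zero_t] at this

lemma relEnt_of_mem {p u : ℝ} (hp0 : 0 < p) (hp1 : p < 1) :
    relEnt p u = ENNReal.ofReal (hRel p u) := by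
  rw [relEnt, if_neg (ne_of_gt hp0), if_neg (ne_of_lt hp1)]; rfl

lemma ofReal_phiD_le_relEnt {p u : ℝ} (hp0 : 0 ≤ p) (hp1 : p ≤ 1) (hu0 : 0 ≤ u)
    (hu1 : u ≤ 1) (t : ℝ) : ENNReal.ofReal (phiD p u t) ≤ relEnt p u := by
  rcases eq_or_lt_of_le hp0 with h0 | h0
  · subst h0
    rw [relEnt, if_pos rfl]
    rcases eq_or_ne u 0 with hu | hu
    · subst hu; simp [phiD_p_zero]
    · simp [hu]
  rcases eq_or_lt_of_le hp1 with h1 | h1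
  · subst h1
    rw [relEnt, if_neg (by norm_num), if_pos rfl]
    rcases eq_or_ne u 1 with hu | hu
    · subst hu; simp [phiD_p_one]
    · simp [hu]
  rw [relEnt_of_mem h0 h1]
  exact ENNReal.ofReal_le_ofReal (phiD_le_hRel h0 h1 hu0 hu1 t)

lemma phiD_tst {p u : ℝ} (hp0 : 0 < p) (hp1 : p < 1) (hu0 : 0 < u) (hu1 : u < 1) :
    phiD p u (tst p u) = hRel p u := by
  have h1p : (0:ℝ) < 1 - p := by linarith
  have h1u : (0:ℝ) < 1 - u := by linarith
  have hne1 : u ≠ 0 := ne_of_gt hu0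
  have hne2 : (1:ℝ) - u ≠ 0 := ne_of_gt h1u
  have hne3 : p ≠ 0 := ne_of_gt hp0
  have hne4 : (1:ℝ) - p ≠ 0 := ne_of_gt h1p
  have hx : (0:ℝ) < u * (1-p) / (p * (1-u)) :=
    div_pos (mul_pos hu0 h1p) (mul_pos hp0 h1u)
  have hb : p * Real.exp (tst p u) + 1 - p = (1-p)/(1-u) := by
    rw [tst, Real.exp_log hx]
    field_simp
    ring
  have h1 : tst p u = Real.log u + Real.log (1-p) - (Real.log p + Real.log (1-u)) := by
    rw [tst, Real.log_div (by positivity) (by positivity),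
      Real.log_mul hne1 hne4, Real.log_mul hne3 hne2]
  rw [phiD, hb, Real.log_div (ne_of_gt h1p) hne2, h1, hRel,
    Real.log_div hne1 hne3, Real.log_div hne2 hne4]
  ring


lemma aOpt_abs_le {M p u : ℝ} (hM : 0 ≤ M) : |aOpt M p u| ≤ M := by
  rw [aOpt]
  split_ifs with h1 h2 h3 h4 h5
  · rw [abs_of_nonneg hM]
  · rw [abs_neg, abs_of_nonneg hM]
  · rw [abs_neg, abs_of_nonneg hM]
  · rw [abs_of_nonneg hM]
  · exact h5
  · rw [abs_zero]; exact hM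

lemma phiD_aOpt_nonneg {M p u : ℝ} (hM : 0 ≤ M) (hp0 : 0 ≤ p) (hp1 : p ≤ 1)
    (hu0 : 0 ≤ u) (hu1 : u ≤ 1) : 0 ≤ phiD p u (aOpt M p u) := by
  rw [aOpt]
  split_ifs with h1 h2 h3 h4 h5
  · have : p = 0 := le_antisymm h1 hp0
    subst this
    rw [phiD_p_zero]
    positivity
  · have : p = 1 := le_antisymm hp1 h2
    subst this
    rw [phiD_p_one]
    nlinarith
  · have hp0' : 0 < p := lt_of_not_ge h1
    have hp1' : p < 1 := lt_of_not_ge h2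
    have : u = 0 := le_antisymm h3 hu0
    subst this
    rw [phiD_u_zero]
    have harg : p * Real.exp (-M) + 1 - p ≤ 1 := by
      nlinarith [Real.exp_le_one_iff.mpr (neg_nonpos.mpr hM), Real.exp_pos (-M)]
    have := Real.log_nonpos (by nlinarith [Real.exp_pos (-M)]) harg
    linarith
  · have hp0' : 0 < p := lt_of_not_ge h1
    have : u = 1 := le_antisymm hu1 h4
    subst this
    rw [phiD_u_one hp0' hp1]
    have harg : p + (1-p) * Real.exp (-M) ≤ 1 := by
      nlinarith [Real.exp_le_one_iff.mpr (neg_nonpos.mpr hM), Real.exp_pos (-M)]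
    have := Real.log_nonpos (by nlinarith [Real.exp_pos (-M)]) harg
    linarith
  · rw [phiD_tst (lt_of_not_ge h1) (lt_of_not_ge h2) (lt_of_not_ge h3) (lt_of_not_ge h4)]
    exact hRel_nonneg (lt_of_not_ge h1) (lt_of_not_ge h2) hu0 hu1
  · rw [phiD_zero_t]

lemma phiD_aOpt_mono {p u : ℝ} (hp0 : 0 ≤ p) (hp1 : p ≤ 1) (hu0 : 0 ≤ u) (hu1 : u ≤ 1)
    {M M' : ℝ} (hM : 0 ≤ M) (hMM : M ≤ M') :
    phiD p u (aOpt M p u) ≤ phiD p u (aOpt M' p u) := by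
  have hM' : 0 ≤ M' := le_trans hM hMM
  rw [aOpt, aOpt]
  split_ifs with h1 h2 h3 h4 h5 h6 h7
  · have hp : p = 0 := le_antisymm h1 hp0
    subst hp
    rw [phiD_p_zero, phiD_p_zero]
    nlinarith
  · have hp : p = 1 := le_antisymm hp1 h2
    subst hp
    rw [phiD_p_one, phiD_p_one]
    nlinarith
  · have hp0' : 0 < p := lt_of_not_ge h1
    have hu : u = 0 := le_antisymm h3 hu0
    subst hu
    rw [phiD_u_zero, phiD_u_zero]
    have harg : p * Real.exp (-M') + 1 - p ≤ p * Real.exp (-M) + 1 - p := by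
      nlinarith [Real.exp_le_exp.mpr (neg_le_neg hMM)]
    have := Real.log_le_log (by nlinarith [Real.exp_pos (-M')]) harg
    linarith
  · have hp0' : 0 < p := lt_of_not_ge h1
    have hu : u = 1 := le_antisymm hu1 h4
    subst hu
    rw [phiD_u_one hp0' hp1, phiD_u_one hp0' hp1]
    have harg : p + (1-p) * Real.exp (-M') ≤ p + (1-p) * Real.exp (-M) := by
      nlinarith [Real.exp_le_exp.mpr (neg_le_neg hMM)]
    have := Real.log_le_log (by nlinarith [Real.exp_pos (-M')]) harg
    linarith
  · exact le_rfl
  · exact absurd (le_trans h5 hMM) h6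
  · rw [phiD_zero_t, phiD_tst (lt_of_not_ge h1) (lt_of_not_ge h2) (lt_of_not_ge h3)
      (lt_of_not_ge h4)]
    exact hRel_nonneg (lt_of_not_ge h1) (lt_of_not_ge h2) hu0 hu1
  · exact le_rfl

lemma isup_phiD_aOpt {p u : ℝ} (hp0 : 0 ≤ p) (hp1 : p ≤ 1) (hu0 : 0 ≤ u) (hu1 : u ≤ 1) :
    (⨆ M : ℕ, ENNReal.ofReal (phiD p u (aOpt (M:ℝ) p u))) = relEnt p u := by
  have hmono : Monotone fun M : ℕ => ENNReal.ofReal (phiD p u (aOpt (M:ℝ) p u)) := by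
    intro M M' h
    exact ENNReal.ofReal_le_ofReal
      (phiD_aOpt_mono hp0 hp1 hu0 hu1 (Nat.cast_nonneg M) (Nat.cast_le.mpr h))
  have htop : ∀ c : ℝ, 0 < c → (⨆ M : ℕ, ENNReal.ofReal ((M:ℝ) * c)) = ⊤ := by
    intro c hc
    rw [iSup_eq_top]
    intro b hb
    obtain ⟨n, hn⟩ := exists_nat_gt (b.toReal / c)
    refine ⟨n, ?_⟩
    rw [ENNReal.lt_ofReal_iff_toReal_lt hb.ne]
    rw [div_lt_iff₀ hc] at hn
    linarith
  rcases eq_or_lt_of_le hp0 with h0 | h0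
  · -- p = 0
    subst h0
    have ha : ∀ M : ℝ, aOpt M 0 u = M := fun M => if_pos le_rfl
    rw [relEnt, if_pos rfl]
    rcases eq_or_ne u 0 with hu | hu
    · subst hu
      simp [ha, phiD_p_zero]
    · rw [if_neg hu]
      have hc : 0 < u := lt_of_le_of_ne hu0 (Ne.symm hu)
      simp only [ha, phiD_p_zero]
      exact htop u hc
  rcases eq_or_lt_of_le hp1 with h1 | h1
  · -- p = 1
    subst h1
    have ha : ∀ M : ℝ, aOpt M 1 u = -M := fun M => by
      rw [aOpt, if_neg (by norm_num), if_pos le_rfl]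
    rw [relEnt, if_neg (by norm_num), if_pos rfl]
    rcases eq_or_ne u 1 with hu | hu
    · subst hu
      simp [ha, phiD_p_one]
    · rw [if_neg hu]
      have hc : 0 < 1 - u := by
        rcases lt_or_eq_of_le hu1 with h | h
        · linarith
        · exact absurd h hu
      have : ∀ M : ℕ, phiD 1 u (aOpt (M:ℝ) 1 u) = (M:ℝ) * (1-u) := by
        intro M
        rw [ha, phiD_p_one]
        ring
      simp only [this]
      exact htop (1-u) hc
  -- 0 < p < 1
  have hnp1 : ¬ p ≤ 0 := not_le.mpr h0
  have hnp2 : ¬ 1 ≤ p := not_le.mpr h1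
  rw [relEnt_of_mem h0 h1]
  rcases eq_or_lt_of_le hu0 with hu | hu
  · -- u = 0
    rw [← hu]  -- hu : 0 = u
    have ha : ∀ M : ℝ, aOpt M p 0 = -M := fun M => by
      rw [aOpt, if_neg hnp1, if_neg hnp2, if_pos le_rfl]
    have hval : ∀ M : ℕ, phiD p 0 (aOpt (M:ℝ) p 0)
        = - Real.log (p * Real.exp (-(M:ℝ)) + 1 - p) := by
      intro M
      rw [ha, phiD_u_zero]
    have hrel : hRel p 0 = - Real.log (1 - p) := by
      rw [hRel]
      simp [Real.log_zero, one_div, Real.log_inv]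
    have hmono' : Monotone fun M : ℕ => ENNReal.ofReal (phiD p 0 (aOpt (M:ℝ) p 0)) := by
      intro M M' h
      exact ENNReal.ofReal_le_ofReal
        (phiD_aOpt_mono hp0 hp1 le_rfl (by norm_num) (Nat.cast_nonneg M) (Nat.cast_le.mpr h))
    apply iSup_eq_of_tendsto hmono'
    rw [hrel]
    apply ENNReal.tendsto_ofReal
    simp only [hval]
    have hexp : Tendsto (fun M : ℕ => Real.exp (-(M:ℝ))) atTop (nhds 0) := by
      have : ∀ M : ℕ, Real.exp (-(M:ℝ)) = (Real.exp (-1)) ^ M := by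
        intro M
        rw [← Real.exp_nat_mul]
        norm_num
      simp only [this]
      exact tendsto_pow_atTop_nhds_zero_of_lt_one (le_of_lt (Real.exp_pos _))
        (Real.exp_lt_one_iff.mpr (by norm_num))
    have harg : Tendsto (fun M : ℕ => p * Real.exp (-(M:ℝ)) + 1 - p) atTop (nhds (1-p)) := by
      have := (hexp.const_mul p).add_const (1-p)
      simp only [mul_zero, zero_add] at this
      convert this using 2 with M
      ring
    exact (((Real.continuousAt_log (by linarith)).tendsto.comp harg)).neg
  rcases eq_or_lt_of_le hu1 with hu' | hu'
  · -- u = 1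
    subst hu'
    have ha : ∀ M : ℝ, aOpt M p 1 = M := fun M => by
      rw [aOpt, if_neg hnp1, if_neg hnp2, if_neg (by norm_num), if_pos le_rfl]
    have hval : ∀ M : ℕ, phiD p 1 (aOpt (M:ℝ) p 1)
        = - Real.log (p + (1-p) * Real.exp (-(M:ℝ))) := by
      intro M
      rw [ha, phiD_u_one h0 hp1]
    have hrel : hRel p 1 = - Real.log p := by
      rw [hRel]
      simp [Real.log_zero, one_div, Real.log_inv]
    apply iSup_eq_of_tendsto hmono
    rw [hrel]
    apply ENNReal.tendsto_ofReal
    simp only [hval]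
    have hexp : Tendsto (fun M : ℕ => Real.exp (-(M:ℝ))) atTop (nhds 0) := by
      have : ∀ M : ℕ, Real.exp (-(M:ℝ)) = (Real.exp (-1)) ^ M := by
        intro M
        rw [← Real.exp_nat_mul]
        norm_num
      simp only [this]
      exact tendsto_pow_atTop_nhds_zero_of_lt_one (le_of_lt (Real.exp_pos _))
        (Real.exp_lt_one_iff.mpr (by norm_num))
    have harg : Tendsto (fun M : ℕ => p + (1-p) * Real.exp (-(M:ℝ))) atTop (nhds p) := by
      have := (hexp.const_mul (1-p)).const_add p
      simp only [mul_zero, add_zero] at this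
      exact this
    exact (((Real.continuousAt_log (by linarith)).tendsto.comp harg)).neg
  -- 0 < u < 1
  have hnu1 : ¬ u ≤ 0 := not_le.mpr hu
  have hnu2 : ¬ 1 ≤ u := not_le.mpr hu'
  apply le_antisymm
  · apply iSup_le
    intro M
    rw [← relEnt_of_mem h0 h1]
    exact ofReal_phiD_le_relEnt hp0 hp1 hu0 hu1 _
  · have hM0 : |tst p u| ≤ ((⌈|tst p u|⌉₊ : ℕ) : ℝ) := Nat.le_ceil _
    refine le_trans ?_ (le_iSup _ (⌈|tst p u|⌉₊))
    rw [aOpt, if_neg hnp1, if_neg hnp2, if_neg hnu1, if_neg hnu2, if_pos hM0,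
      phiD_tst h0 h1 hu hu']


lemma measurableSet_unitSq : MeasurableSet unitSq :=
  measurableSet_Icc.prod measurableSet_Icc

lemma volume_unitSq : (volume : Measure (ℝ×ℝ)) unitSq = 1 := by
  rw [unitSq, Measure.volume_eq_prod, Measure.prod_prod, Real.volume_Icc]
  norm_num

instance : IsFiniteMeasure ((volume : Measure (ℝ×ℝ)).restrict unitSq) := by
  constructor
  rw [Measure.restrict_apply_univ, volume_unitSq]
  exact ENNReal.one_lt_top

lemma integrableOn_unitSq_of_bdd {g : ℝ×ℝ → ℝ} {C : ℝ} (hm : Measurable g)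
    (hb : ∀ q, |g q| ≤ C) : IntegrableOn g unitSq := by
  refine (integrable_const C).mono' hm.aestronglyMeasurable ?_
  exact Eventually.of_forall fun q => by simpa [Real.norm_eq_abs] using hb q

lemma measurable_tst2 : Measurable fun z : ℝ×ℝ => tst z.1 z.2 := by
  apply Real.measurable_log.comp
  exact (measurable_snd.mul ((measurable_const (a := (1:ℝ))).sub measurable_fst)).div
    (measurable_fst.mul ((measurable_const (a := (1:ℝ))).sub measurable_snd))

lemma measurable_aOpt2 (M : ℝ) : Measurable fun z : ℝ×ℝ => aOpt M z.1 z.2 := by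
  simp only [aOpt]
  refine Measurable.ite (measurableSet_le measurable_fst measurable_const)
    measurable_const ?_
  refine Measurable.ite (measurableSet_le measurable_const measurable_fst)
    measurable_const ?_
  refine Measurable.ite (measurableSet_le measurable_snd measurable_const)
    measurable_const ?_
  refine Measurable.ite (measurableSet_le measurable_const measurable_snd)
    measurable_const ?_
  exact Measurable.ite (measurableSet_le measurable_tst2.abs measurable_const)
    measurable_tst2 measurable_const

/-- the optimal dual variable as a function on the square -/
def aM (W f : ℝ → ℝ → ℝ) (M : ℝ) : ℝ × ℝ → ℝ :=
  fun q => aOpt M (W q.1 q.2) (f q.1 q.2)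

lemma measurable_uncurry_fst_snd {W : ℝ → ℝ → ℝ} (hW : Measurable (Function.uncurry W)) :
    Measurable fun q : ℝ×ℝ => W q.1 q.2 := hW

lemma measurable_aM {W f : ℝ → ℝ → ℝ} (hW : Measurable (Function.uncurry W))
    (hf : Measurable (Function.uncurry f)) (M : ℝ) : Measurable (aM W f M) :=
  (measurable_aOpt2 M).comp ((measurable_uncurry_fst_snd hW).prodMk
    (measurable_uncurry_fst_snd hf))

lemma measurable_phiD_comp {W f : ℝ → ℝ → ℝ} (hW : Measurable (Function.uncurry W))
    (hf : Measurable (Function.uncurry f)) {a : ℝ×ℝ → ℝ} (ha : Measurable a) :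
    Measurable fun q : ℝ×ℝ => phiD (W q.1 q.2) (f q.1 q.2) (a q) := by
  have hW' := measurable_uncurry_fst_snd hW
  have hf' := measurable_uncurry_fst_snd hf
  simp only [phiD]
  exact (ha.mul hf').sub (Real.measurable_log.comp
    (((hW'.mul (Real.measurable_exp.comp ha)).add measurable_const).sub hW'))

lemma abs_log_base_le {p t : ℝ} (hp0 : 0 ≤ p) (hp1 : p ≤ 1) :
    |Real.log (p * Real.exp t + 1 - p)| ≤ |t| := by
  rw [abs_le]
  constructor
  · have h1 : Real.exp (-|t|) ≤ p * Real.exp t + 1 - p := by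
      nlinarith [Real.exp_le_exp.mpr (neg_abs_le t),
        Real.exp_le_one_iff.mpr (neg_nonpos.mpr (abs_nonneg t)), Real.exp_pos (-|t|)]
    have := Real.log_le_log (Real.exp_pos _) h1
    rwa [Real.log_exp] at this
  · have h1 : p * Real.exp t + 1 - p ≤ Real.exp |t| := by
      nlinarith [Real.exp_le_exp.mpr (le_abs_self t), Real.one_le_exp (abs_nonneg t),
        Real.exp_pos t]
    have := Real.log_le_log (base_pos hp0 hp1 t) h1
    rwa [Real.log_exp] at this

lemma abs_phiD_le {p u t : ℝ} (hp0 : 0 ≤ p) (hp1 : p ≤ 1) (hu0 : 0 ≤ u) (hu1 : u ≤ 1) :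
    |phiD p u t| ≤ 2 * |t| := by
  have h1 := abs_log_base_le (t := t) hp0 hp1
  have h2 : |t * u| ≤ |t| := by
    rw [abs_mul, abs_of_nonneg hu0]
    nlinarith [abs_nonneg t]
  have h3 := abs_add_le (t * u) (-(Real.log (p * Real.exp t + 1 - p)))
  rw [abs_neg] at h3
  rw [phiD, sub_eq_add_neg]
  calc |t * u + -(Real.log (p * Real.exp t + 1 - p))|
      ≤ |t * u| + |Real.log (p * Real.exp t + 1 - p)| := h3
    _ ≤ 2 * |t| := by linarith

lemma lint_eq_iSup {W f : ℝ → ℝ → ℝ} (hW : IsGraphon W) (hf : IsGraphon f) :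
    (∫⁻ q in unitSq, relEnt (W q.1 q.2) (f q.1 q.2)) =
    ⨆ M : ℕ, ENNReal.ofReal
      (∫ q in unitSq, phiD (W q.1 q.2) (f q.1 q.2) (aM W f (M:ℝ) q)) := by
  obtain ⟨hWm, hWb, -⟩ := hW
  obtain ⟨hfm, hfb, -⟩ := hf
  have key : ∀ q : ℝ×ℝ, relEnt (W q.1 q.2) (f q.1 q.2)
      = ⨆ M : ℕ, ENNReal.ofReal (phiD (W q.1 q.2) (f q.1 q.2) (aM W f (M:ℝ) q)) := by
    intro q
    exact (isup_phiD_aOpt (hWb _ _).1 (hWb _ _).2 (hfb _ _).1 (hfb _ _).2).symm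
  rw [lintegral_congr key, lintegral_iSup]
  · refine iSup_congr fun M => ?_
    rw [← ofReal_integral_eq_lintegral_ofReal]
    · refine integrableOn_unitSq_of_bdd (C := 2 * M)
        (measurable_phiD_comp hWm hfm (measurable_aM hWm hfm _)) fun q => ?_
      refine le_trans (abs_phiD_le (hWb _ _).1 (hWb _ _).2 (hfb _ _).1 (hfb _ _).2) ?_
      have := aOpt_abs_le (M := (M:ℝ)) (p := W q.1 q.2) (u := f q.1 q.2) (Nat.cast_nonneg M)
      simp only [aM]
      linarith
    · exact Eventually.of_forall fun q =>
        phiD_aOpt_nonneg (Nat.cast_nonneg M) (hWb _ _).1 (hWb _ _).2 (hfb _ _).1 (hfb _ _).2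
  · intro M
    exact ENNReal.measurable_ofReal.comp
      (measurable_phiD_comp hWm hfm (measurable_aM hWm hfm _))
  · intro M M' h q
    exact ENNReal.ofReal_le_ofReal (phiD_aOpt_mono (hWb _ _).1 (hWb _ _).2 (hfb _ _).1
      (hfb _ _).2 (Nat.cast_nonneg M) (Nat.cast_le.mpr h))

lemma ofReal_max_zero (x : ℝ) : ENNReal.ofReal (max x 0) = ENNReal.ofReal x := by
  rcases le_total x 0 with h | h
  · rw [max_eq_right h, ENNReal.ofReal_of_nonpos h]
    simp
  · rw [max_eq_left h]

/-- the fundamental upper bound: the dual functional is below the entropy -/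
lemma ofReal_integral_phiD_le {W g : ℝ → ℝ → ℝ} (hW : IsGraphon W) (hg : IsGraphon g)
    {a : ℝ×ℝ → ℝ} (ham : Measurable a) {C : ℝ} (hab : ∀ q, |a q| ≤ C) :
    ENNReal.ofReal (∫ q in unitSq, phiD (W q.1 q.2) (g q.1 q.2) (a q))
      ≤ ∫⁻ q in unitSq, relEnt (W q.1 q.2) (g q.1 q.2) := by
  obtain ⟨hWm, hWb, -⟩ := hW
  obtain ⟨hgm, hgb, -⟩ := hg
  have hmeas := measurable_phiD_comp hWm hgm ham
  have hint : IntegrableOn (fun q : ℝ×ℝ => phiD (W q.1 q.2) (g q.1 q.2) (a q)) unitSq :=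
    integrableOn_unitSq_of_bdd (C := 2 * C) hmeas fun q => by
      refine le_trans (abs_phiD_le (hWb _ _).1 (hWb _ _).2 (hgb _ _).1 (hgb _ _).2) ?_
      nlinarith [hab q, abs_nonneg (a q)]
  have hintp : IntegrableOn (fun q : ℝ×ℝ => max (phiD (W q.1 q.2) (g q.1 q.2) (a q)) 0)
      unitSq := hint.pos_part
  have step1 : (∫ q in unitSq, phiD (W q.1 q.2) (g q.1 q.2) (a q))
      ≤ ∫ q in unitSq, max (phiD (W q.1 q.2) (g q.1 q.2) (a q)) 0 :=
    integral_mono hint hintp fun q => le_max_left _ _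
  refine le_trans (ENNReal.ofReal_le_ofReal step1) ?_
  rw [ofReal_integral_eq_lintegral_ofReal hintp
    (Eventually.of_forall fun q => le_max_right _ _)]
  refine lintegral_mono fun q => ?_
  rw [ofReal_max_zero]
  exact ofReal_phiD_le_relEnt (hWb _ _).1 (hWb _ _).2 (hgb _ _).1 (hgb _ _).2 _

lemma log_base_lipschitz {p : ℝ} (hp0 : 0 ≤ p) (hp1 : p ≤ 1) (s t : ℝ) :
    |Real.log (p * Real.exp t + 1 - p) - Real.log (p * Real.exp s + 1 - p)| ≤ |t - s| := by
  have key : ∀ s t : ℝ, s ≤ t →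
      Real.log (p * Real.exp t + 1 - p) - Real.log (p * Real.exp s + 1 - p) ≤ t - s ∧
      0 ≤ Real.log (p * Real.exp t + 1 - p) - Real.log (p * Real.exp s + 1 - p) := by
    intro s t hst
    constructor
    · have e1 : Real.exp (t-s) * Real.exp s = Real.exp t := by
        rw [← Real.exp_add]
        ring_nf
      have h1 : p * Real.exp t + 1 - p ≤ Real.exp (t - s) * (p * Real.exp s + 1 - p) := by
        nlinarith [Real.one_le_exp (sub_nonneg.2 hst), base_pos hp0 hp1 s,
          Real.exp_pos (t-s)]
      have h2 := Real.log_le_log (base_pos hp0 hp1 t) h1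
      rw [Real.log_mul (Real.exp_ne_zero _) (ne_of_gt (base_pos hp0 hp1 s)),
        Real.log_exp] at h2
      linarith
    · have h1 : p * Real.exp s + 1 - p ≤ p * Real.exp t + 1 - p := by
        nlinarith [Real.exp_le_exp.mpr hst]
      have := Real.log_le_log (base_pos hp0 hp1 s) h1
      linarith
  rcases le_total s t with h | h
  · obtain ⟨h1, h2⟩ := key s t h
    rw [abs_le, abs_of_nonneg (by linarith : (0:ℝ) ≤ t - s)]
    constructor <;> linarith
  · obtain ⟨h1, h2⟩ := key t s h
    rw [abs_le, abs_of_nonpos (by linarith : t - s ≤ 0)]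
    constructor <;> linarith

/-- Lipschitz continuity of the dual functional in the dual variable -/
lemma integral_phiD_diff_le {W f : ℝ → ℝ → ℝ} (hW : IsGraphon W) (hf : IsGraphon f)
    {a b : ℝ×ℝ → ℝ} (ham : Measurable a) (hbm : Measurable b) {Ca Cb : ℝ}
    (hab : ∀ q, |a q| ≤ Ca) (hbb : ∀ q, |b q| ≤ Cb) :
    (∫ q in unitSq, phiD (W q.1 q.2) (f q.1 q.2) (a q)) -
      (∫ q in unitSq, phiD (W q.1 q.2) (f q.1 q.2) (b q))
      ≤ 2 * ∫ q in unitSq, |a q - b q| := by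
  obtain ⟨hWm, hWb, -⟩ := hW
  obtain ⟨hfm, hfb, -⟩ := hf
  have hCa : 0 ≤ Ca := le_trans (abs_nonneg _) (hab (0,0))
  have hCb : 0 ≤ Cb := le_trans (abs_nonneg _) (hbb (0,0))
  have hintA : IntegrableOn (fun q : ℝ×ℝ => phiD (W q.1 q.2) (f q.1 q.2) (a q)) unitSq :=
    integrableOn_unitSq_of_bdd (C := 2*Ca) (measurable_phiD_comp hWm hfm ham) fun q => by
      refine le_trans (abs_phiD_le (hWb _ _).1 (hWb _ _).2 (hfb _ _).1 (hfb _ _).2) ?_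
      nlinarith [hab q, abs_nonneg (a q)]
  have hintB : IntegrableOn (fun q : ℝ×ℝ => phiD (W q.1 q.2) (f q.1 q.2) (b q)) unitSq :=
    integrableOn_unitSq_of_bdd (C := 2*Cb) (measurable_phiD_comp hWm hfm hbm) fun q => by
      refine le_trans (abs_phiD_le (hWb _ _).1 (hWb _ _).2 (hfb _ _).1 (hfb _ _).2) ?_
      nlinarith [hbb q, abs_nonneg (b q)]
  have hintd : IntegrableOn (fun q : ℝ×ℝ => |a q - b q|) unitSq :=
    integrableOn_unitSq_of_bdd (C := Ca + Cb) (ham.sub hbm).abs fun q => by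
      rw [abs_abs]
      calc |a q - b q| ≤ |a q| + |b q| := abs_sub _ _
        _ ≤ Ca + Cb := add_le_add (hab q) (hbb q)
  rw [← integral_sub hintA hintB, ← integral_const_mul]
  refine integral_mono (hintA.sub hintB) (hintd.const_mul 2) fun q => ?_
  have h1 : (a q - b q) * (f q.1 q.2) ≤ |a q - b q| := by
    calc (a q - b q) * (f q.1 q.2) ≤ |a q - b q| * (f q.1 q.2) :=
          mul_le_mul_of_nonneg_right (le_abs_self _) (hfb _ _).1
      _ ≤ |a q - b q| * 1 := mul_le_mul_of_nonneg_left (hfb _ _).2 (abs_nonneg _)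
      _ = |a q - b q| := mul_one _
  have h2 := (abs_le.mp (log_base_lipschitz (hWb q.1 q.2).1 (hWb q.1 q.2).2 (b q) (a q))).1
  simp only [phiD]
  nlinarith [h1, h2, neg_abs_le (a q - b q)]

/-! ### Grid step functions and the cut distance -/

def gridQ (N : ℕ) (x : ℝ) : ℝ := ((⌈(N:ℝ) * x⌉ : ℤ) : ℝ) / N

def Sgrid (N : ℕ) (i : ℕ) : Set ℝ := Icc (0:ℝ) 1 ∩ {x : ℝ | ⌈(N:ℝ) * x⌉ = (i:ℤ)}

def stepOf (g : ℝ×ℝ → ℝ) (N : ℕ) : ℝ×ℝ → ℝ := fun q => g (gridQ N q.1, gridQ N q.2)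

lemma measurable_gridQ (N : ℕ) : Measurable (gridQ N) :=
  (measurable_from_top.comp ((measurable_const_mul ((N:ℝ))).ceil)).div_const _

lemma measurable_stepOf {g : ℝ×ℝ → ℝ} (hg : Continuous g) (N : ℕ) :
    Measurable (stepOf g N) :=
  hg.measurable.comp (((measurable_gridQ N).comp measurable_fst).prodMk
    ((measurable_gridQ N).comp measurable_snd))

lemma measurableSet_Sgrid (N i : ℕ) : MeasurableSet (Sgrid N i) := by
  apply measurableSet_Icc.inter
  exact ((measurable_const_mul ((N:ℝ))).ceil) (measurableSet_singleton ((i:ℤ)))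

lemma Sgrid_subset (N i : ℕ) : Sgrid N i ⊆ Icc (0:ℝ) 1 := inter_subset_left

lemma gridQ_eq_on {N i : ℕ} {x : ℝ} (hx : x ∈ Sgrid N i) : gridQ N x = (i:ℝ)/N := by
  rw [gridQ, hx.2]
  norm_num

lemma gridQ_mem {N : ℕ} (hN : 0 < N) {x : ℝ} (hx : x ∈ Icc (0:ℝ) 1) :
    gridQ N x ∈ Icc (0:ℝ) 1 := by
  have hN' : (0:ℝ) < N := by exact_mod_cast hN
  have h0 : (0:ℤ) ≤ ⌈(N:ℝ) * x⌉ := Int.ceil_nonneg (by nlinarith [hx.1])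
  have h1 : ⌈(N:ℝ) * x⌉ ≤ (N:ℤ) := by
    apply Int.ceil_le.2
    push_cast
    nlinarith [hx.2]
  rw [gridQ]
  constructor
  · apply div_nonneg _ (le_of_lt hN')
    exact_mod_cast h0
  · rw [div_le_one hN']
    exact_mod_cast h1

lemma abs_gridQ_sub {N : ℕ} (hN : 0 < N) (x : ℝ) : |gridQ N x - x| ≤ 1/N := by
  have hN' : (0:ℝ) < N := by exact_mod_cast hN
  have h0 : (N:ℝ) * x ≤ (⌈(N:ℝ) * x⌉ : ℤ) := Int.le_ceil _
  have h1 : ((⌈(N:ℝ) * x⌉ : ℤ) : ℝ) < (N:ℝ) * x + 1 := Int.ceil_lt_add_one _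
  rw [gridQ, abs_of_nonneg (by rw [sub_nonneg, le_div_iff₀ hN']; linarith)]
  rw [div_sub' (ne_of_gt hN'), div_le_div_iff₀ hN' hN']
  nlinarith

lemma unitSq_eq_biUnion (N : ℕ) :
    unitSq = ⋃ ij ∈ (Finset.range (N+1) ×ˢ Finset.range (N+1)),
      Sgrid N ij.1 ×ˢ Sgrid N ij.2 := by
  ext q
  simp only [mem_iUnion, Finset.mem_product, Finset.mem_range, exists_prop]
  constructor
  · intro hq
    have hx := hq.1
    have hy := hq.2
    have hidx : ∀ z : ℝ, z ∈ Icc (0:ℝ) 1 → (⌈(N:ℝ) * z⌉.toNat < N + 1 ∧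
        ⌈(N:ℝ) * z⌉ = ((⌈(N:ℝ) * z⌉.toNat : ℕ) : ℤ)) := by
      intro z hz
      have h0 : (0:ℤ) ≤ ⌈(N:ℝ) * z⌉ := Int.ceil_nonneg (by nlinarith [hz.1, Nat.cast_nonneg (α := ℝ) N])
      have h1 : ⌈(N:ℝ) * z⌉ ≤ (N:ℤ) := by
        apply Int.ceil_le.2
        push_cast
        nlinarith [hz.2, Nat.cast_nonneg (α := ℝ) N]
      constructor
      · have := Int.toNat_le.2 h1
        omega
      · rw [Int.toNat_of_nonneg h0]
    obtain ⟨hx1, hx2⟩ := hidx q.1 hx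
    obtain ⟨hy1, hy2⟩ := hidx q.2 hy
    exact ⟨(⌈(N:ℝ) * q.1⌉.toNat, ⌈(N:ℝ) * q.2⌉.toNat), ⟨hx1, hy1⟩,
      ⟨⟨hx, hx2⟩, ⟨hy, hy2⟩⟩⟩
  · rintro ⟨ij, -, hmem⟩
    exact ⟨Sgrid_subset N ij.1 hmem.1, Sgrid_subset N ij.2 hmem.2⟩

lemma pairwise_disjoint_grid (N : ℕ) :
    (↑(Finset.range (N+1) ×ˢ Finset.range (N+1)) : Set (ℕ×ℕ)).Pairwise
      (Function.onFun Disjoint fun ij : ℕ×ℕ => (Sgrid N ij.1 ×ˢ Sgrid N ij.2 : Set (ℝ×ℝ))) := by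
  intro a _ b _ hab
  simp only [Function.onFun]
  rw [Set.disjoint_left]
  rintro ⟨x, y⟩ h1 h2
  apply hab
  have e1 : (a.1 : ℤ) = (b.1 : ℤ) := by rw [← h1.1.2, ← h2.1.2]
  have e2 : (a.2 : ℤ) = (b.2 : ℤ) := by rw [← h1.2.2, ← h2.2.2]
  have : a.1 = b.1 := by exact_mod_cast e1
  have : a.2 = b.2 := by exact_mod_cast e2
  ext <;> assumption

lemma bound_of_compactSupport {g : ℝ×ℝ → ℝ} (hc : Continuous g) (hs : HasCompactSupport g) :
    ∃ C : ℝ, 0 ≤ C ∧ ∀ z, |g z| ≤ C := by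
  obtain ⟨C, hC⟩ := hs.exists_bound_of_continuousOn hc.continuousOn
  refine ⟨max C 0, le_max_right _ _, fun z => ?_⟩
  by_cases hz : z ∈ tsupport g
  · exact le_trans (by simpa [Real.norm_eq_abs] using hC z hz) (le_max_left _ _)
  · rw [image_eq_zero_of_notMem_tsupport hz, abs_zero]
    exact le_max_right _ _

lemma bddAbove_cut {F f : ℝ → ℝ → ℝ} (hF : IsGraphon F) (hf : IsGraphon f) :
    BddAbove (Set.range fun p : {S : Set ℝ // MeasurableSet S ∧ S ⊆ Set.Icc (0:ℝ) 1} ×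
      {T : Set ℝ // MeasurableSet T ∧ T ⊆ Set.Icc (0:ℝ) 1} =>
      |∫ q in ((p.1 : Set ℝ) ×ˢ (p.2 : Set ℝ)), (F q.1 q.2 - f q.1 q.2)|) := by
  refine ⟨2, ?_⟩
  rintro r ⟨p, rfl⟩
  have hsub : ((p.1 : Set ℝ) ×ˢ (p.2 : Set ℝ)) ⊆ unitSq :=
    Set.prod_mono p.1.2.2 p.2.2.2
  haveI : IsFiniteMeasure ((volume : Measure (ℝ×ℝ)).restrict ((p.1 : Set ℝ) ×ˢ (p.2 : Set ℝ))) := by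
    constructor
    rw [Measure.restrict_apply_univ]
    exact lt_of_le_of_lt (measure_mono hsub) (by rw [volume_unitSq]; exact ENNReal.one_lt_top)
  have hb : ∀ᵐ q ∂((volume : Measure (ℝ×ℝ)).restrict ((p.1 : Set ℝ) ×ˢ (p.2 : Set ℝ))),
      ‖F q.1 q.2 - f q.1 q.2‖ ≤ 2 := by
    refine Eventually.of_forall fun q => ?_
    have h1 := hF.2.1 q.1 q.2
    have h2 := hf.2.1 q.1 q.2
    rw [Real.norm_eq_abs, abs_le]
    constructor <;> [nlinarith [h1.1, h1.2, h2.1, h2.2]; nlinarith [h1.1, h1.2, h2.1, h2.2]]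
  have := norm_integral_le_of_norm_le_const hb
  rw [Real.norm_eq_abs] at this
  refine le_trans this ?_
  have hle : ((volume : Measure (ℝ×ℝ)).restrict ((p.1 : Set ℝ) ×ˢ (p.2 : Set ℝ))) Set.univ ≤ 1 := by
    rw [Measure.restrict_apply_univ]
    exact le_trans (measure_mono hsub) (le_of_eq volume_unitSq)
  have := ENNReal.toReal_mono ENNReal.one_ne_top hle
  rw [ENNReal.toReal_one, ← measureReal_def] at this
  nlinarith

lemma abs_setIntegral_le_cutDist {F f : ℝ → ℝ → ℝ} (hF : IsGraphon F) (hf : IsGraphon f)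
    {S T : Set ℝ} (hS : MeasurableSet S) (hS1 : S ⊆ Set.Icc (0:ℝ) 1)
    (hT : MeasurableSet T) (hT1 : T ⊆ Set.Icc (0:ℝ) 1) :
    |∫ q in S ×ˢ T, (F q.1 q.2 - f q.1 q.2)| ≤ cutDist F f :=
  le_ciSup (bddAbove_cut hF hf) ((⟨S, hS, hS1⟩, ⟨T, hT, hT1⟩) :
    {S : Set ℝ // MeasurableSet S ∧ S ⊆ Set.Icc (0:ℝ) 1} ×
    {T : Set ℝ // MeasurableSet T ∧ T ⊆ Set.Icc (0:ℝ) 1})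

lemma abs_integral_step_mul_le {g : ℝ×ℝ → ℝ} (hgc : Continuous g) {Cg : ℝ}
    (hgb : ∀ z, |g z| ≤ Cg) (N : ℕ) {F f : ℝ → ℝ → ℝ} (hF : IsGraphon F)
    (hf : IsGraphon f) :
    |∫ q in unitSq, stepOf g N q * (F q.1 q.2 - f q.1 q.2)|
      ≤ (∑ ij ∈ Finset.range (N+1) ×ˢ Finset.range (N+1),
          |g ((ij.1:ℝ)/N, (ij.2:ℝ)/N)|) * cutDist F f := by
  have hFm := measurable_uncurry_fst_snd hF.1
  have hfm := measurable_uncurry_fst_snd hf.1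
  have hhm : Measurable fun q : ℝ×ℝ => F q.1 q.2 - f q.1 q.2 := hFm.sub hfm
  have hhb : ∀ q : ℝ×ℝ, |F q.1 q.2 - f q.1 q.2| ≤ 2 := fun q => by
    have h1 := hF.2.1 q.1 q.2
    have h2 := hf.2.1 q.1 q.2
    rw [abs_le]
    constructor <;> nlinarith [h1.1, h1.2, h2.1, h2.2]
  have hint : IntegrableOn (fun q : ℝ×ℝ => stepOf g N q * (F q.1 q.2 - f q.1 q.2)) unitSq :=
    integrableOn_unitSq_of_bdd (C := Cg * 2) ((measurable_stepOf hgc N).mul hhm)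
      (fun q => by
        rw [abs_mul]
        exact mul_le_mul (hgb _) (hhb q) (abs_nonneg _)
          (le_trans (abs_nonneg _) (hgb (0,0))))
  rw [unitSq_eq_biUnion N, integral_biUnion_finset _
    (fun ij _ => (measurableSet_Sgrid N ij.1).prod (measurableSet_Sgrid N ij.2))
    (pairwise_disjoint_grid N)
    (fun ij hij => by
      refine hint.mono_set ?_
      rw [unitSq_eq_biUnion N]
      intro q hq
      exact Set.mem_biUnion hij hq)]
  have heach : ∀ ij ∈ Finset.range (N+1) ×ˢ Finset.range (N+1),
      (∫ q in Sgrid N ij.1 ×ˢ Sgrid N ij.2, stepOf g N q * (F q.1 q.2 - f q.1 q.2))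
        = g ((ij.1:ℝ)/N, (ij.2:ℝ)/N) *
          ∫ q in Sgrid N ij.1 ×ˢ Sgrid N ij.2, (F q.1 q.2 - f q.1 q.2) := by
    intro ij _
    rw [← integral_const_mul]
    apply setIntegral_congr_fun
      ((measurableSet_Sgrid N ij.1).prod (measurableSet_Sgrid N ij.2))
    rintro ⟨x, y⟩ hq
    simp only [stepOf]
    rw [gridQ_eq_on hq.1, gridQ_eq_on hq.2]
  rw [Finset.sum_congr rfl heach]
  refine le_trans (Finset.abs_sum_le_sum_abs _ _) ?_
  rw [Finset.sum_mul]
  refine Finset.sum_le_sum fun ij hij => ?_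
  rw [abs_mul]
  exact mul_le_mul_of_nonneg_left (abs_setIntegral_le_cutDist hF hf
    (measurableSet_Sgrid _ _) (Sgrid_subset _ _) (measurableSet_Sgrid _ _) (Sgrid_subset _ _))
    (abs_nonneg _)

lemma tendsto_integral_step_mul {g : ℝ×ℝ → ℝ} (hgc : Continuous g) {Cg : ℝ}
    (hgb : ∀ z, |g z| ≤ Cg) (N : ℕ) {F : ℕ → ℝ → ℝ → ℝ} (hF : ∀ n, IsGraphon (F n))
    {f : ℝ → ℝ → ℝ} (hf : IsGraphon f)
    (hconv : Tendsto (fun n => cutDist (F n) f) atTop (nhds 0)) :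
    Tendsto (fun n => ∫ q in unitSq, stepOf g N q * (F n q.1 q.2 - f q.1 q.2))
      atTop (nhds 0) := by
  refine squeeze_zero_norm (a := fun n =>
    (∑ ij ∈ Finset.range (N+1) ×ˢ Finset.range (N+1), |g ((ij.1:ℝ)/N, (ij.2:ℝ)/N)|)
      * cutDist (F n) f) (fun n => ?_) ?_
  · simpa [Real.norm_eq_abs] using abs_integral_step_mul_le hgc hgb N (hF n) hf
  · simpa using hconv.const_mul
      (∑ ij ∈ Finset.range (N+1) ×ˢ Finset.range (N+1), |g ((ij.1:ℝ)/N, (ij.2:ℝ)/N)|)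


end LSC

/-- `I_{W₀}` is lower semicontinuous w.r.t. the cut distance. -/
theorem stmt4 {m : ℕ} (γ : Fin m → ℝ) (hγ : GoodWidths γ)
    (W₀ : ℝ → ℝ → ℝ) (P : Fin m → Fin m → ℝ)
    (hW : IsGraphon W₀) (hWb : IsBlockGraphon γ P W₀)
    (F : ℕ → ℝ → ℝ → ℝ) (hF : ∀ n, IsGraphon (F n))
    (f : ℝ → ℝ → ℝ) (hf : IsGraphon f)
    (hconv : Filter.Tendsto (fun n => cutDist (F n) f) Filter.atTop (nhds 0)) :
    Ient W₀ f ≤ Filter.liminf (fun n => Ient W₀ (F n)) Filter.atTop := by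
  have hWm := hW.1
  have hWb := hW.2.1
  have hfm := hf.1
  have hfb := hf.2.1
  have main : (∫⁻ q in unitSq, relEnt (W₀ q.1 q.2) (f q.1 q.2))
      ≤ liminf (fun n => ∫⁻ q in unitSq, relEnt (W₀ q.1 q.2) (F n q.1 q.2)) atTop := by
    rw [lint_eq_iSup hW hf]
    refine iSup_le fun M => ?_
    have haam : Measurable (aM W₀ f (M:ℝ)) := measurable_aM hWm hfm _
    have haab : ∀ q, |aM W₀ f (M:ℝ) q| ≤ (M:ℝ) := fun q => aOpt_abs_le (Nat.cast_nonneg M)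
    have key : ∀ ε : ℝ, 0 < ε →
        ENNReal.ofReal
          ((∫ q in unitSq, phiD (W₀ q.1 q.2) (f q.1 q.2) (aM W₀ f (M:ℝ) q)) - 2*ε)
        ≤ liminf (fun n => ∫⁻ q in unitSq, relEnt (W₀ q.1 q.2) (F n q.1 q.2)) atTop := by
      intro ε hε
      have haaInt : IntegrableOn (aM W₀ f (M:ℝ)) unitSq :=
        integrableOn_unitSq_of_bdd haam haab
      have hAint : Integrable (unitSq.indicator (aM W₀ f (M:ℝ))) volume :=
        haaInt.integrable_indicator measurableSet_unitSq
      obtain ⟨g, hgsupp, hgL1, hgc, hgint⟩ :=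
        hAint.exists_hasCompactSupport_integral_sub_le (by positivity : (0:ℝ) < ε/2)
      obtain ⟨Cg, hCg0, hCgb⟩ := bound_of_compactSupport hgc hgsupp
      have hcpt : IsCompact unitSq := isCompact_Icc.prod isCompact_Icc
      have hunif := hcpt.uniformContinuousOn_of_continuous hgc.continuousOn
      rw [Metric.uniformContinuousOn_iff] at hunif
      obtain ⟨δ, hδ, hδ2⟩ := hunif (ε/2) (by positivity)
      obtain ⟨N, hNgt⟩ := exists_nat_gt (1/δ)
      have hN0R : (0:ℝ) < N := lt_trans (by positivity) hNgt
      have hN0 : 0 < N := by exact_mod_cast hN0R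
      have hNδ : 1/(N:ℝ) < δ := by
        rw [div_lt_iff₀ hN0R]
        rw [div_lt_iff₀ hδ] at hNgt
        nlinarith
      set s := stepOf g N with hs
      have hsm : Measurable s := measurable_stepOf hgc N
      have hsb : ∀ q, |s q| ≤ Cg := fun q => hCgb _
      have hstep_pt : ∀ q ∈ unitSq, |g q - s q| ≤ ε/2 := by
        rintro ⟨x, y⟩ hq
        have hgs : ((gridQ N x, gridQ N y) : ℝ×ℝ) ∈ unitSq :=
          ⟨gridQ_mem hN0 hq.1, gridQ_mem hN0 hq.2⟩
        have hdist : dist ((x,y) : ℝ×ℝ) ((gridQ N x, gridQ N y) : ℝ×ℝ) < δ := by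
          rw [Prod.dist_eq]
          apply max_lt
          · rw [Real.dist_eq, abs_sub_comm]
            exact lt_of_le_of_lt (abs_gridQ_sub hN0 x) hNδ
          · rw [Real.dist_eq, abs_sub_comm]
            exact lt_of_le_of_lt (abs_gridQ_sub hN0 y) hNδ
        have h := hδ2 (x,y) hq ((gridQ N x, gridQ N y)) hgs hdist
        rw [Real.dist_eq] at h
        exact le_of_lt h
      have hdiff_int : (∫ q in unitSq, |aM W₀ f (M:ℝ) q - s q|) ≤ ε := by
        have int1 : IntegrableOn (fun q => |aM W₀ f (M:ℝ) q - s q|) unitSq :=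
          integrableOn_unitSq_of_bdd (C := M + Cg) (haam.sub hsm).abs (fun q => by
            rw [abs_abs]
            exact le_trans (abs_sub _ _) (add_le_add (haab q) (hsb q)))
        have intA : IntegrableOn
            (fun q => |unitSq.indicator (aM W₀ f (M:ℝ)) q - g q|) unitSq :=
          ((hAint.sub hgint).abs).integrableOn
        have intC : IntegrableOn (fun _ : ℝ×ℝ => (ε/2 : ℝ)) unitSq :=
          integrableOn_const (by rw [volume_unitSq]; exact ENNReal.one_ne_top)
        have int2 : IntegrableOn
            (fun q => |unitSq.indicator (aM W₀ f (M:ℝ)) q - g q| + ε/2) unitSq :=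
          intA.add intC
        have mono1 : ∀ q ∈ unitSq, |aM W₀ f (M:ℝ) q - s q|
            ≤ |unitSq.indicator (aM W₀ f (M:ℝ)) q - g q| + ε/2 := by
          intro q hq
          have hAq : unitSq.indicator (aM W₀ f (M:ℝ)) q = aM W₀ f (M:ℝ) q :=
            indicator_of_mem hq _
          calc |aM W₀ f (M:ℝ) q - s q|
              ≤ |aM W₀ f (M:ℝ) q - g q| + |g q - s q| := abs_sub_le _ _ _
            _ ≤ |unitSq.indicator (aM W₀ f (M:ℝ)) q - g q| + ε/2 := by
                rw [hAq]
                exact add_le_add le_rfl (hstep_pt q hq)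
        calc (∫ q in unitSq, |aM W₀ f (M:ℝ) q - s q|)
            ≤ ∫ q in unitSq, (|unitSq.indicator (aM W₀ f (M:ℝ)) q - g q| + ε/2) :=
              setIntegral_mono_on int1 int2 measurableSet_unitSq mono1
          _ = (∫ q in unitSq, |unitSq.indicator (aM W₀ f (M:ℝ)) q - g q|)
              + ∫ _ in unitSq, (ε/2:ℝ) := integral_add intA intC
          _ ≤ (∫ q, |unitSq.indicator (aM W₀ f (M:ℝ)) q - g q|) + ε/2 := by
              have h1 := setIntegral_le_integral (s := unitSq) ((hAint.sub hgint).abs)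
                (Eventually.of_forall fun q => abs_nonneg _)
              have h2 : (∫ _ in unitSq, (ε/2:ℝ)) = ε/2 := by
                rw [setIntegral_const, measureReal_def, volume_unitSq]
                simp
              rw [h2]
              exact add_le_add h1 le_rfl
          _ ≤ ε/2 + ε/2 := by
              refine add_le_add ?_ le_rfl
              have heq : (∫ q, |unitSq.indicator (aM W₀ f (M:ℝ)) q - g q|)
                  = ∫ q, ‖unitSq.indicator (aM W₀ f (M:ℝ)) q - g q‖ := by
                simp [Real.norm_eq_abs]
              rw [heq]
              exact hgL1
          _ = ε := by ring
      have hintF : ∀ n, IntegrableOn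
          (fun q : ℝ×ℝ => phiD (W₀ q.1 q.2) (F n q.1 q.2) (s q)) unitSq := by
        intro n
        refine integrableOn_unitSq_of_bdd (C := 2*Cg)
          (measurable_phiD_comp hWm (hF n).1 hsm) fun q => ?_
        refine le_trans (abs_phiD_le (hWb _ _).1 (hWb _ _).2
          ((hF n).2.1 _ _).1 ((hF n).2.1 _ _).2) ?_
        nlinarith [hsb q, abs_nonneg (s q)]
      have hintf : IntegrableOn
          (fun q : ℝ×ℝ => phiD (W₀ q.1 q.2) (f q.1 q.2) (s q)) unitSq := by
        refine integrableOn_unitSq_of_bdd (C := 2*Cg)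
          (measurable_phiD_comp hWm hfm hsm) fun q => ?_
        refine le_trans (abs_phiD_le (hWb _ _).1 (hWb _ _).2
          (hfb _ _).1 (hfb _ _).2) ?_
        nlinarith [hsb q, abs_nonneg (s q)]
      have hJdiff : ∀ n, (∫ q in unitSq, phiD (W₀ q.1 q.2) (F n q.1 q.2) (s q))
          - (∫ q in unitSq, phiD (W₀ q.1 q.2) (f q.1 q.2) (s q))
          = ∫ q in unitSq, s q * (F n q.1 q.2 - f q.1 q.2) := by
        intro n
        rw [← integral_sub (hintF n) hintf]
        apply setIntegral_congr_fun measurableSet_unitSq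
        intro q _
        simp only [phiD]
        ring
      have hJconv : Tendsto (fun n => ∫ q in unitSq, phiD (W₀ q.1 q.2) (F n q.1 q.2) (s q))
          atTop (nhds (∫ q in unitSq, phiD (W₀ q.1 q.2) (f q.1 q.2) (s q))) := by
        rw [← tendsto_sub_nhds_zero_iff]
        have ht := tendsto_integral_step_mul hgc hCgb N hF hf hconv
        exact ht.congr fun n => (hJdiff n).symm
      have hliminf_eq : liminf (fun n => ENNReal.ofReal
          (∫ q in unitSq, phiD (W₀ q.1 q.2) (F n q.1 q.2) (s q))) atTop
          = ENNReal.ofReal (∫ q in unitSq, phiD (W₀ q.1 q.2) (f q.1 q.2) (s q)) :=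
        (ENNReal.tendsto_ofReal hJconv).liminf_eq
      have hbound : ∀ n, ENNReal.ofReal
          (∫ q in unitSq, phiD (W₀ q.1 q.2) (F n q.1 q.2) (s q))
          ≤ ∫⁻ q in unitSq, relEnt (W₀ q.1 q.2) (F n q.1 q.2) := fun n =>
        ofReal_integral_phiD_le hW (hF n) hsm hsb
      have hchain : ENNReal.ofReal
          (∫ q in unitSq, phiD (W₀ q.1 q.2) (f q.1 q.2) (s q))
          ≤ liminf (fun n => ∫⁻ q in unitSq, relEnt (W₀ q.1 q.2) (F n q.1 q.2)) atTop := by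
        rw [← hliminf_eq]
        exact liminf_le_liminf (Eventually.of_forall hbound)
      refine le_trans (ENNReal.ofReal_le_ofReal ?_) hchain
      have hlip := integral_phiD_diff_le hW hf haam hsm haab hsb
      linarith [hdiff_int, hlip]
    have htdt : Tendsto (fun k : ℕ => ENNReal.ofReal
        ((∫ q in unitSq, phiD (W₀ q.1 q.2) (f q.1 q.2) (aM W₀ f (M:ℝ) q))
          - 2*(1/((k:ℝ)+1))))
        atTop (nhds (ENNReal.ofReal
          (∫ q in unitSq, phiD (W₀ q.1 q.2) (f q.1 q.2) (aM W₀ f (M:ℝ) q)))) := by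
      apply ENNReal.tendsto_ofReal
      have h0 : Tendsto (fun k : ℕ => 2 * (1/((k:ℝ)+1))) atTop (nhds 0) := by
        simpa using (tendsto_one_div_add_atTop_nhds_zero_nat (𝕜 := ℝ)).const_mul 2
      simpa using tendsto_const_nhds.sub h0
    exact le_of_tendsto htdt
      (Eventually.of_forall fun k => key (1/((k:ℝ)+1)) (by positivity))
  simp only [Ient]
  have h2 : ((1:ℝ≥0∞)/2) *
      liminf (fun n => ∫⁻ q in unitSq, relEnt (W₀ q.1 q.2) (F n q.1 q.2)) atTop
      = liminf (fun n => ((1:ℝ≥0∞)/2)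
          * ∫⁻ q in unitSq, relEnt (W₀ q.1 q.2) (F n q.1 q.2)) atTop := by
    refine Monotone.map_liminf_of_continuousAt (f := fun x : ℝ≥0∞ => (1/2) * x)
      (fun a b h => mul_le_mul_right h _) _ ?_
    exact (ENNReal.continuous_const_mul (by norm_num)).continuousAt
  calc (1/2 : ℝ≥0∞) * ∫⁻ q in unitSq, relEnt (W₀ q.1 q.2) (f q.1 q.2)
      ≤ (1/2 : ℝ≥0∞) * liminf
          (fun n => ∫⁻ q in unitSq, relEnt (W₀ q.1 q.2) (F n q.1 q.2)) atTop :=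
        mul_le_mul_right main _
    _ = _ := h2

end GraphonLDP
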